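/- arXiv:2504.17564 — 3 statements merged into one kernel-verified Lean document; each statement's English description precedes it below -/
import Mathlib

section
/- Let k ≥ 2 and n ≥ 1 be integers and let d ≠ 1 be a divisor of kn+1. Then the permutation σ_{k,n} possesses exactly φ(d)/ord_k(d) orbits whose elements x satisfy (kn+1)/gcd(x, kn+1) = d; each such orbit has cardinality ord_k(d). -/
/-- The `(k,n)`-perfect shuffle map `x ↦ k*x mod (k*n+1)` on `{1, …, k*n}`. -/
def shuffleFun (k n : ℕ) (x : {x : ℕ // x ∈ Finset.Icc 1 (k * n)}) :
    {x : ℕ // x ∈ Finset.Icc 1 (k * n)} :=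
  ⟨k * x.1 % (k * n + 1), by
    have hx := Finset.mem_Icc.mp x.2
    have hco : Nat.Coprime (k * n + 1) k :=
      (Nat.coprime_mul_left_add_left 1 k n).mpr (Nat.coprime_one_left k)
    have hlt : k * x.1 % (k * n + 1) < k * n + 1 := Nat.mod_lt _ (Nat.succ_pos _)
    have hne : k * x.1 % (k * n + 1) ≠ 0 := by
      intro h0
      have hdvd : (k * n + 1) ∣ k * x.1 := Nat.dvd_of_mod_eq_zero h0
      have hdx : (k * n + 1) ∣ x.1 := hco.dvd_of_dvd_mul_left hdvd
      have := Nat.le_of_dvd (by omega) hdx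
      omega
    exact Finset.mem_Icc.mpr ⟨by omega, by omega⟩⟩

theorem shuffleFun_bijective (k n : ℕ) : Function.Bijective (shuffleFun k n) := by
  have hinj : Function.Injective (shuffleFun k n) := by
    intro x y hxy
    have h : k * x.1 % (k * n + 1) = k * y.1 % (k * n + 1) := congrArg Subtype.val hxy
    have hx := Finset.mem_Icc.mp x.2
    have hy := Finset.mem_Icc.mp y.2
    have hco : Nat.Coprime (k * n + 1) k :=
      (Nat.coprime_mul_left_add_left 1 k n).mpr (Nat.coprime_one_left k)
    have hmod : x.1 % (k * n + 1) = y.1 % (k * n + 1) :=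
      Nat.ModEq.cancel_left_of_coprime hco h
    rw [Nat.mod_eq_of_lt (by omega), Nat.mod_eq_of_lt (by omega)] at hmod
    exact Subtype.ext hmod
  exact Finite.injective_iff_bijective.mp hinj

/-- The `(k,n)`-perfect shuffle permutation `σ_{k,n}` of `{1, …, k*n}`. -/
noncomputable def pshuffle (k n : ℕ) : Equiv.Perm {x : ℕ // x ∈ Finset.Icc 1 (k * n)} :=
  Equiv.ofBijective _ (shuffleFun_bijective k n)

/-- The setoid on `α` identifying points on the same cycle (orbit) of `σ`. -/
def sameCycleSetoid {α : Type*} (σ : Equiv.Perm α) : Setoid α :=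
  ⟨σ.SameCycle, ⟨Equiv.Perm.SameCycle.refl σ, fun h => h.symm, fun h h' => h.trans h'⟩⟩

/-- The number of cycles (orbits, including fixed points) of a permutation. -/
noncomputable def cycleCount {α : Type*} (σ : Equiv.Perm α) : ℕ :=
  Nat.card (Quotient (sameCycleSetoid σ))

/-!
Write `N = k * n + 1` and `e = N / d`. The points `x` with `N / gcd x N = d` are exactly the
multiples `e * u` with `u` a unit modulo `d`, and `σ (e * u) = e * (k * u mod d)`. Hence
`u ↦ e * u` embeds `(ZMod d)ˣ` into `{1, …, k * n}` with image these points, intertwining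
multiplication by `k` with `σ`. The orbits of `σ` meeting this image thus correspond to the cosets
of `⟨k⟩` in `(ZMod d)ˣ`: there are `φ d / ord_k d` of them, each of size `ord_k d`.
-/

namespace Equiv.Perm

variable {α β : Type*} {τ : Perm α} {σ : Perm β} {f : α → β}

theorem _root_.Function.Semiconj.perm_zpow (h : Function.Semiconj f τ σ) (i : ℤ) :
    Function.Semiconj f ⇑(τ ^ i) ⇑(σ ^ i) := by
  have hinv : Function.Semiconj f ⇑τ⁻¹ ⇑σ⁻¹ :=
    h.inverses_right τ.apply_symm_apply σ.symm_apply_apply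
  cases i with
  | ofNat m => simpa [coe_pow] using h.iterate_right m
  | negSucc m => simpa [zpow_negSucc, ← inv_pow, coe_pow] using hinv.iterate_right (m + 1)

theorem sameCycle_apply_iff_of_semiconj (hf : f.Injective) (h : Function.Semiconj f τ σ)
    {a b : α} : σ.SameCycle (f a) (f b) ↔ τ.SameCycle a b :=
  exists_congr fun i => by rw [← h.perm_zpow i a, hf.eq_iff]

theorem SameCycle.mem_range_of_semiconj (h : Function.Semiconj f τ σ) {a : α} {y : β}
    (hy : σ.SameCycle (f a) y) : y ∈ Set.range f := by
  obtain ⟨i, rfl⟩ := hy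
  exact ⟨(τ ^ i) a, h.perm_zpow i a⟩

theorem card_sameCycle_of_semiconj (hf : f.Injective) (h : Function.Semiconj f τ σ) (a : α) :
    Nat.card {y // σ.SameCycle (f a) y} = Nat.card {b // τ.SameCycle a b} := by
  refine (Nat.card_eq_of_bijective
    (fun b => ⟨f b.1, (sameCycle_apply_iff_of_semiconj hf h).2 b.2⟩) ⟨?_, ?_⟩).symm
  · exact fun b c hbc => Subtype.ext (hf (congrArg Subtype.val hbc))
  · rintro ⟨y, hy⟩
    obtain ⟨b, rfl⟩ := hy.mem_range_of_semiconj h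
    exact ⟨⟨b, (sameCycle_apply_iff_of_semiconj hf h).1 hy⟩, rfl⟩

theorem card_cycles_in_range_of_semiconj (hf : f.Injective) (h : Function.Semiconj f τ σ) :
    Nat.card {q : Quotient (sameCycleSetoid σ) //
      ∀ y, Quotient.mk (sameCycleSetoid σ) y = q → y ∈ Set.range f} =
      Nat.card (Quotient (sameCycleSetoid τ)) := by
  let F : Quotient (sameCycleSetoid τ) → {q : Quotient (sameCycleSetoid σ) //
      ∀ y, Quotient.mk (sameCycleSetoid σ) y = q → y ∈ Set.range f} :=
    Quotient.lift (fun a => ⟨Quotient.mk _ (f a), fun y hy =>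
        (Quotient.exact hy).symm.mem_range_of_semiconj h⟩)
      fun a b hab => Subtype.ext (Quotient.sound ((sameCycle_apply_iff_of_semiconj hf h).2 hab))
  refine (Nat.card_eq_of_bijective F ⟨?_, ?_⟩).symm
  · refine Quotient.ind₂ fun a b hab => Quotient.sound ?_
    exact (sameCycle_apply_iff_of_semiconj hf h).1 (Quotient.exact (congrArg Subtype.val hab))
  · rintro ⟨q, hq⟩
    obtain ⟨y, rfl⟩ := Quotient.exists_rep q
    obtain ⟨a, rfl⟩ := hq y rfl
    exact ⟨Quotient.mk _ a, rfl⟩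

end Equiv.Perm

section MulRight

variable {G : Type*} [Group G] (g : G)

theorem Equiv.Perm.sameCycle_mulRight_iff {a b : G} :
    (Equiv.mulRight g).SameCycle a b ↔ a⁻¹ * b ∈ Subgroup.zpowers g := by
  simp only [Equiv.Perm.SameCycle, Equiv.zpow_mulRight, Equiv.coe_mulRight,
    Subgroup.mem_zpowers_iff, eq_inv_mul_iff_mul_eq]

theorem card_quotient_sameCycle_mulRight :
    Nat.card (Quotient (sameCycleSetoid (Equiv.mulRight g))) = (Subgroup.zpowers g).index := by
  have : sameCycleSetoid (Equiv.mulRight g) = QuotientGroup.leftRel (Subgroup.zpowers g) :=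
    Setoid.ext fun a b => by
      rw [QuotientGroup.leftRel_apply]; exact Equiv.Perm.sameCycle_mulRight_iff g
  rw [this, Subgroup.index_eq_card]
  rfl

theorem card_sameCycle_mulRight (a : G) :
    Nat.card {b // (Equiv.mulRight g).SameCycle a b} = orderOf g := by
  rw [← Nat.card_zpowers]
  exact Nat.card_congr ((Equiv.mulLeft a⁻¹).subtypeEquiv
    fun b => Equiv.Perm.sameCycle_mulRight_iff g)

end MulRight

theorem Subgroup.index_zpowers {G : Type*} [Group G] [Finite G] (g : G) :
    (zpowers g).index = Nat.card G / orderOf g := by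
  rw [← index_mul_card (zpowers g), Nat.card_zpowers, Nat.mul_div_cancel _ (orderOf_pos g)]

theorem Nat.div_gcd_eq_iff_exists_coprime {N d x : ℕ} (hN : N ≠ 0) (hd : d ∣ N) :
    N / x.gcd N = d ↔ ∃ u, u.Coprime d ∧ x = N / d * u := by
  constructor
  · rintro rfl
    have hg : 0 < x.gcd N := Nat.gcd_pos_of_pos_right x (Nat.pos_of_ne_zero hN)
    rw [Nat.div_div_self (Nat.gcd_dvd_right x N) hN]
    exact ⟨x / x.gcd N, Nat.coprime_div_gcd_div_gcd hg,
      (Nat.mul_div_cancel' (Nat.gcd_dvd_left x N)).symm⟩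
  · rintro ⟨u, hu, rfl⟩
    obtain ⟨e, rfl⟩ := hd
    have hd0 : d ≠ 0 := left_ne_zero_of_mul hN
    have he0 : e ≠ 0 := right_ne_zero_of_mul hN
    rw [Nat.mul_div_cancel_left e (Nat.pos_of_ne_zero hd0), mul_comm d e, Nat.gcd_mul_left,
      hu.gcd_eq_one, mul_one, Nat.mul_div_cancel_left d (Nat.pos_of_ne_zero he0)]

theorem Nat.div_mul_mem_Icc_iff {N d u : ℕ} (hd : d ∣ N + 1) :
    (N + 1) / d * u ∈ Finset.Icc 1 N ↔ u ≠ 0 ∧ u < d := by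
  have hd0 : 0 < d := Nat.pos_of_dvd_of_pos hd N.add_one_pos
  obtain ⟨e, he⟩ := hd
  have he0 : 0 < e := Nat.pos_of_ne_zero (right_ne_zero_of_mul (he ▸ N.add_one_ne_zero))
  rw [he, Nat.mul_div_cancel_left e hd0, Finset.mem_Icc, Nat.one_le_iff_ne_zero,
    mul_ne_zero_iff, ← Nat.lt_add_one_iff, he, mul_comm d e, Nat.mul_lt_mul_left he0]
  simp [he0.ne']

theorem Nat.coprime_mul_add_one (k n : ℕ) : k.Coprime (k * n + 1) :=
  ((Nat.coprime_mul_left_add_left 1 k n).mpr (Nat.coprime_one_left k)).symm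

section ShuffleOfUnit

variable {k n d : ℕ}

def shuffleOfUnit (hd : d ∣ k * n + 1) (hd1 : d ≠ 1) (v : (ZMod d)ˣ) :
    {x : ℕ // x ∈ Finset.Icc 1 (k * n)} :=
  ⟨(k * n + 1) / d * (v : ZMod d).val, (Nat.div_mul_mem_Icc_iff hd).2 <| by
    have : NeZero d := ⟨ne_zero_of_dvd_ne_zero (k * n).add_one_ne_zero hd⟩
    have : Nontrivial (ZMod d) := ZMod.nontrivial_iff.2 hd1
    exact ⟨(ZMod.val_ne_zero _).2 v.ne_zero, ZMod.val_lt _⟩⟩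

variable (hd : d ∣ k * n + 1) (hd1 : d ≠ 1)

theorem shuffleOfUnit_injective : (shuffleOfUnit hd hd1).Injective := by
  have : NeZero d := ⟨ne_zero_of_dvd_ne_zero (k * n).add_one_ne_zero hd⟩
  have he : 0 < (k * n + 1) / d :=
    Nat.div_pos (Nat.le_of_dvd (k * n).add_one_pos hd) d.pos_of_neZero
  exact fun v w h => Units.ext (ZMod.val_injective d
    (Nat.eq_of_mul_eq_mul_left he (congrArg Subtype.val h)))

theorem mem_range_shuffleOfUnit_iff (x : {x : ℕ // x ∈ Finset.Icc 1 (k * n)}) :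
    x ∈ Set.range (shuffleOfUnit hd hd1) ↔ (k * n + 1) / Nat.gcd x.1 (k * n + 1) = d := by
  rw [Nat.div_gcd_eq_iff_exists_coprime (k * n).add_one_ne_zero hd]
  constructor
  · rintro ⟨v, rfl⟩
    exact ⟨_, ZMod.val_coe_unit_coprime v, rfl⟩
  · rintro ⟨u, hu, hx⟩
    have hud : u < d := ((Nat.div_mul_mem_Icc_iff hd).1 (hx ▸ x.2)).2
    refine ⟨ZMod.unitOfCoprime u hu, Subtype.ext ?_⟩
    rw [hx]
    show _ * _ = _
    rw [ZMod.coe_unitOfCoprime, ZMod.val_natCast, Nat.mod_eq_of_lt hud]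

theorem semiconj_shuffleOfUnit (hkd : k.Coprime d) :
    Function.Semiconj (shuffleOfUnit hd hd1) (Equiv.mulRight (ZMod.unitOfCoprime k hkd))
      (pshuffle k n) := by
  intro v
  apply Subtype.ext
  have hd0 : 0 < d := Nat.pos_of_dvd_of_pos hd (k * n).add_one_pos
  obtain ⟨e, he⟩ := hd
  show (k * n + 1) / d * ((v * ZMod.unitOfCoprime k hkd : (ZMod d)ˣ) : ZMod d).val =
    k * ((k * n + 1) / d * (v : ZMod d).val) % (k * n + 1)
  rw [Units.val_mul, ZMod.val_mul, ZMod.coe_unitOfCoprime, ZMod.val_natCast, Nat.mul_mod_mod,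
    he, Nat.mul_div_cancel_left e hd0, mul_left_comm k, mul_comm d e, Nat.mul_mod_mul_left,
    mul_comm k]

end ShuffleOfUnit

theorem perfect_shuffle_orbits_of_divisor_general (k n d : ℕ)
    (hd : d ∣ k * n + 1) (hd1 : d ≠ 1) :
    Nat.card {q : Quotient (sameCycleSetoid (pshuffle k n)) //
        ∀ x, Quotient.mk (sameCycleSetoid (pshuffle k n)) x = q →
          (k * n + 1) / Nat.gcd x.1 (k * n + 1) = d} =
      Nat.totient d / orderOf (k : ZMod d) ∧
    ∀ x : {x : ℕ // x ∈ Finset.Icc 1 (k * n)},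
      (k * n + 1) / Nat.gcd x.1 (k * n + 1) = d →
        Nat.card {y // (pshuffle k n).SameCycle x y} = orderOf (k : ZMod d) := by
  have : NeZero d := ⟨ne_zero_of_dvd_ne_zero (k * n).add_one_ne_zero hd⟩
  have hkd : k.Coprime d := (Nat.coprime_mul_add_one k n).coprime_dvd_right hd
  have hinj := shuffleOfUnit_injective hd hd1
  have hsemi := semiconj_shuffleOfUnit hd hd1 hkd
  have hord : orderOf (k : ZMod d) = orderOf (ZMod.unitOfCoprime k hkd) := by
    rw [← orderOf_units, ZMod.coe_unitOfCoprime]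
  simp_rw [← mem_range_shuffleOfUnit_iff hd hd1]
  constructor
  · rw [Equiv.Perm.card_cycles_in_range_of_semiconj hinj hsemi, card_quotient_sameCycle_mulRight,
      Subgroup.index_zpowers, hord, Nat.card_eq_fintype_card, ZMod.card_units_eq_totient]
  · rintro _ ⟨v, rfl⟩
    rw [Equiv.Perm.card_sameCycle_of_semiconj hinj hsemi, card_sameCycle_mulRight, hord]

theorem perfect_shuffle_orbits_of_divisor (k n d : ℕ) (hk : 2 ≤ k) (hn : 1 ≤ n)
    (hd : d ∣ k * n + 1) (hd1 : d ≠ 1) :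
    Nat.card {q : Quotient (sameCycleSetoid (pshuffle k n)) //
        ∀ x, Quotient.mk (sameCycleSetoid (pshuffle k n)) x = q →
          (k * n + 1) / Nat.gcd x.1 (k * n + 1) = d} =
      Nat.totient d / orderOf (k : ZMod d) ∧
    ∀ x : {x : ℕ // x ∈ Finset.Icc 1 (k * n)},
      (k * n + 1) / Nat.gcd x.1 (k * n + 1) = d →
        Nat.card {y // (pshuffle k n).SameCycle x y} = orderOf (k : ZMod d) :=
  perfect_shuffle_orbits_of_divisor_general k n d hd hd1
end

section
/- Let m ≥ 3 be an odd integer. Then Σ_{d | m, d ≠ 1} φ(d)/ord_2(d) = (1/ord_2(m))·(Σ_{j=0}^{ord_2(m)−1} gcd(2^j − 1, m)) − 1, where gcd(0, m) = m; equivalently, ord_2(m)·(1 + Σ_{d | m, d ≠ 1} φ(d)/ord_2(d)) = Σ_{j=0}^{ord_2(m)−1} gcd(2^j − 1, m). -/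
/-!
Write `o_d` for the order of `2` modulo `d`. Since `gcd(k, m) = ∑_{d ∣ gcd(k, m)} φ(d)` and
`d ∣ 2^j - 1 ↔ o_d ∣ j`, the sum `∑_{j < o_m} gcd(2^j - 1, m)` counts every divisor `d` of `m`
with weight `φ(d)` once for each multiple of `o_d` below `o_m`, i.e. `o_m / o_d` times.
As `o_d` divides both `φ(d)` and `o_m`, this weight equals `o_m · (φ(d) / o_d)`, and `d = 1`
contributes the summand `1`.
-/

open Finset

namespace ZMod

theorem orderOf_natCast_dvd_totient {a n : ℕ} (h : a.Coprime n) :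
    orderOf (a : ZMod n) ∣ n.totient :=
  orderOf_dvd_of_pow_eq_one <| by
    exact_mod_cast (ZMod.natCast_eq_natCast_iff _ _ n).mpr (Nat.ModEq.pow_totient h)

theorem orderOf_natCast_dvd_of_dvd (a : ℕ) {d m : ℕ} (hdm : d ∣ m) :
    orderOf (a : ZMod d) ∣ orderOf (a : ZMod m) := by
  simpa using orderOf_map_dvd (ZMod.castHom hdm (ZMod d)).toMonoidHom (a : ZMod m)

theorem dvd_pow_sub_one_iff_orderOf_dvd {a : ℕ} (ha : a ≠ 0) (d j : ℕ) :
    d ∣ a ^ j - 1 ↔ orderOf (a : ZMod d) ∣ j := by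
  rw [orderOf_dvd_iff_pow_eq_one, ← ZMod.natCast_eq_zero_iff,
    Nat.cast_sub (Nat.one_le_pow _ _ (Nat.pos_of_ne_zero ha)), sub_eq_zero]
  push_cast
  rfl

end ZMod

namespace Nat

theorem card_filter_range_dvd {e n : ℕ} (hen : e ∣ n) : #{j ∈ range n | e ∣ j} = n / e := by
  rcases Nat.eq_zero_or_pos e with rfl | he
  · simp [Nat.eq_zero_of_zero_dvd hen]
  obtain ⟨k, rfl⟩ := hen
  have hmultiples :
      {j ∈ range (e * k) | e ∣ j} = (range k).map ⟨(e * ·), mul_right_injective₀ he.ne'⟩ := by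
    ext j
    simp only [mem_filter, mem_range, mem_map, Function.Embedding.coeFn_mk]
    constructor
    · rintro ⟨hj, i, rfl⟩
      exact ⟨i, (Nat.mul_lt_mul_left he).mp hj, rfl⟩
    · rintro ⟨i, hi, rfl⟩
      exact ⟨(Nat.mul_lt_mul_left he).mpr hi, dvd_mul_right e i⟩
  rw [hmultiples, card_map, card_range, Nat.mul_div_cancel_left _ he]

theorem sum_totient_filter_dvd (k : ℕ) {m : ℕ} (hm : m ≠ 0) :
    ∑ d ∈ m.divisors with d ∣ k, d.totient = k.gcd m := by
  have hfilter : {d ∈ m.divisors | d ∣ k} = {d ∈ m.divisors | d ∣ k.gcd m} :=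
    filter_congr fun d hd ↦ by rw [Nat.dvd_gcd_iff, and_iff_left (Nat.dvd_of_mem_divisors hd)]
  rw [hfilter, divisors_filter_dvd_of_dvd hm (Nat.gcd_dvd_right k m), sum_totient]

end Nat

theorem sum_range_gcd_pow_sub_one {a m n : ℕ} (ha : a ≠ 0) (hm : m ≠ 0)
    (hn : orderOf (a : ZMod m) ∣ n) :
    ∑ j ∈ range n, (a ^ j - 1).gcd m =
      ∑ d ∈ m.divisors, d.totient * (n / orderOf (a : ZMod d)) := by
  calc ∑ j ∈ range n, (a ^ j - 1).gcd m
      = ∑ j ∈ range n, ∑ d ∈ m.divisors, if d ∣ a ^ j - 1 then d.totient else 0 := by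
        simp only [← sum_filter, Nat.sum_totient_filter_dvd _ hm]
    _ = ∑ d ∈ m.divisors, #{j ∈ range n | orderOf (a : ZMod d) ∣ j} * d.totient := by
        rw [sum_comm]
        refine sum_congr rfl fun d _ ↦ ?_
        simp only [← sum_filter, ZMod.dvd_pow_sub_one_iff_orderOf_dvd ha, sum_const, smul_eq_mul]
    _ = ∑ d ∈ m.divisors, d.totient * (n / orderOf (a : ZMod d)) := by
        refine sum_congr rfl fun d hd ↦ ?_
        rw [Nat.card_filter_range_dvd
          ((ZMod.orderOf_natCast_dvd_of_dvd a (Nat.dvd_of_mem_divisors hd)).trans hn), mul_comm]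

theorem sum_totient_div_ord_two_eq_general (m : ℕ) (hodd : Odd m) :
    orderOf (2 : ZMod m) *
        (1 + ∑ d ∈ m.divisors.filter (· ≠ 1), Nat.totient d / orderOf (2 : ZMod d)) =
      ∑ j ∈ Finset.range (orderOf (2 : ZMod m)), Nat.gcd (2 ^ j - 1) m := by
  have hm : m ≠ 0 := hodd.pos.ne'
  have hgcd := sum_range_gcd_pow_sub_one two_ne_zero hm (dvd_refl (orderOf ((2 : ℕ) : ZMod m)))
  have hsplit : 1 + ∑ d ∈ m.divisors.erase 1, d.totient / orderOf (2 : ZMod d) =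
      ∑ d ∈ m.divisors, d.totient / orderOf (2 : ZMod d) := by
    rw [← add_sum_erase _ _ (Nat.one_mem_divisors.mpr hm),
      orderOf_eq_one_iff.mpr (Subsingleton.elim (2 : ZMod 1) 1), Nat.totient_one]
  push_cast at hgcd
  rw [hgcd, filter_ne', hsplit, mul_sum]
  refine sum_congr rfl fun d hd ↦ ?_
  have hdm := Nat.dvd_of_mem_divisors hd
  have htot := ZMod.orderOf_natCast_dvd_totient (Nat.coprime_two_left.mpr (hodd.of_dvd_nat hdm))
  have hord := ZMod.orderOf_natCast_dvd_of_dvd 2 hdm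
  push_cast at htot hord
  rw [← Nat.mul_div_assoc _ htot, ← Nat.mul_div_assoc _ hord, mul_comm]

theorem sum_totient_div_ord_two_eq (m : ℕ) (hm : 3 ≤ m) (hodd : Odd m) :
    orderOf (2 : ZMod m) *
        (1 + ∑ d ∈ m.divisors.filter (· ≠ 1), Nat.totient d / orderOf (2 : ZMod d)) =
      ∑ j ∈ Finset.range (orderOf (2 : ZMod m)), Nat.gcd (2 ^ j - 1) m :=
  sum_totient_div_ord_two_eq_general m hodd
end

section
/- Let k ≥ 2 and ℓ ≥ 2 be integers and set n = k^ℓ − k^{ℓ−1} − 1 (so that kn+1 = (k^ℓ − 1)(k − 1)). Then i_k(kn+1) ≥ (k^ℓ − 1)/ℓ. -/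
/-!
If `d ∣ k^ℓ - 1` then `ord_k(d) ∣ ℓ`, so each term `φ(d)/ord_k(d)` is at least `φ(d)/ℓ`, and summing
over the divisors of `k^ℓ - 1` gives `i_k(k^ℓ - 1) ≥ (k^ℓ - 1)/ℓ` by `∑_{d ∣ m} φ(d) = m`. Since `i_k`
is monotone under divisibility and `k^ℓ - 1` divides `kn + 1 = (k^ℓ - 1)(k - 1)`, the bound carries
over to `i_k(kn + 1)`.
-/

open Nat

noncomputable def ik (k m : ℕ) : ℕ :=
  ∑ d ∈ m.divisors, φ d / orderOf (k : ZMod d)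

theorem ik_le_ik_of_dvd (k : ℕ) {m N : ℕ} (h : m ∣ N) (hN : N ≠ 0) : ik k m ≤ ik k N :=
  Finset.sum_le_sum_of_subset (Nat.divisors_subset_of_dvd hN h)

theorem orderOf_natCast_dvd_totient {k d : ℕ} (h : k.Coprime d) :
    orderOf (k : ZMod d) ∣ φ d := by
  apply orderOf_dvd_of_pow_eq_one
  rw [← Nat.cast_pow, ← Nat.cast_one, ZMod.natCast_eq_natCast_iff]
  exact Nat.ModEq.pow_totient h

theorem totient_le_mul_totient_div_orderOf {k d l : ℕ} (hl : 0 < l) (h : (k : ZMod d) ^ l = 1) :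
    φ d ≤ l * (φ d / orderOf (k : ZMod d)) := by
  have hcop : k.Coprime d := (ZMod.isUnit_iff_coprime k d).mp (IsUnit.of_pow_eq_one h hl.ne')
  have hord_le : orderOf (k : ZMod d) ≤ l := Nat.le_of_dvd hl (orderOf_dvd_of_pow_eq_one h)
  calc φ d = orderOf (k : ZMod d) * (φ d / orderOf (k : ZMod d)) :=
        (Nat.mul_div_cancel' (orderOf_natCast_dvd_totient hcop)).symm
    _ ≤ l * (φ d / orderOf (k : ZMod d)) := Nat.mul_le_mul_right _ hord_le

theorem natCast_pow_eq_one_of_dvd_pow_sub_one {k l d : ℕ} (hk : 0 < k) (hd : d ∣ k ^ l - 1) :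
    (k : ZMod d) ^ l = 1 := by
  have hmod : 1 ≡ k ^ l [MOD d] := (Nat.modEq_iff_dvd' (Nat.one_le_pow _ _ hk)).mpr hd
  rw [← Nat.cast_pow, ← Nat.cast_one, ZMod.natCast_eq_natCast_iff]
  exact hmod.symm

theorem pow_sub_one_le_mul_ik {k l : ℕ} (hk : 0 < k) (hl : 0 < l) :
    k ^ l - 1 ≤ l * ik k (k ^ l - 1) := by
  calc k ^ l - 1 = ∑ d ∈ (k ^ l - 1).divisors, φ d := (Nat.sum_totient _).symm
    _ ≤ ∑ d ∈ (k ^ l - 1).divisors, l * (φ d / orderOf (k : ZMod d)) :=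
        Finset.sum_le_sum fun d hd => totient_le_mul_totient_div_orderOf hl
          (natCast_pow_eq_one_of_dvd_pow_sub_one hk (Nat.dvd_of_mem_divisors hd))
    _ = l * ik k (k ^ l - 1) := (Finset.mul_sum _ _ _).symm

theorem mul_sub_sub_one_add_one {k a : ℕ} (hk : 2 ≤ k) (ha : 1 ≤ a) :
    k * (a * k - a - 1) + 1 = (a * k - 1) * (k - 1) := by
  have hak : a * 2 ≤ a * k := Nat.mul_le_mul_left a hk
  zify [show a ≤ a * k by omega, show 1 ≤ a * k - a by omega, show 1 ≤ a * k by omega,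
    show 1 ≤ k by omega]
  ring

theorem ik_lower_bound (k l : ℕ) (hk : 2 ≤ k) (hl : 2 ≤ l) (n : ℕ)
    (hn : n = k ^ l - k ^ (l - 1) - 1) :
    ((k ^ l - 1 : ℕ) : ℝ) / (l : ℝ) ≤
      ((∑ d ∈ (k * n + 1).divisors, Nat.totient d / orderOf (k : ZMod d) : ℕ) : ℝ) := by
  obtain ⟨j, rfl⟩ : ∃ j, l = j + 1 := ⟨l - 1, by omega⟩
  have hfactor : k * n + 1 = (k ^ (j + 1) - 1) * (k - 1) := by
    rw [hn, Nat.add_sub_cancel, pow_succ]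
    exact mul_sub_sub_one_add_one hk (Nat.one_le_pow _ _ (by omega))
  have hbound : k ^ (j + 1) - 1 ≤ (j + 1) * ik k (k * n + 1) :=
    (pow_sub_one_le_mul_ik (by omega) j.succ_pos).trans <| Nat.mul_le_mul_left _ <|
      ik_le_ik_of_dvd k ⟨k - 1, hfactor⟩ (by omega)
  rw [div_le_iff₀ (by positivity), mul_comm]
  exact_mod_cast hbound
end
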